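/- Fix 0<q<1. For every integer m≥1 and every q ∈ (0,1), (Θ^m P_0)(q) = −3 P_0(q) P_m(q). Moreover, for each m≥1 there is a multivariate polynomial with rational coefficients, independent of q, expressing P_m(q) as a polynomial in A_0(q), A_1(q), …, A_{m−1}(q). -/

import Mathlib

/-- `A i (q) = Σ_{m≥1} m^i σ(m) q^m` where `σ(m)` is the sum of positive divisors of `m`. -/
noncomputable def A (q : ℝ) (i : ℕ) : ℝ :=
  ∑' m : ℕ, (m : ℝ) ^ i * (∑ d ∈ Nat.divisors m, (d : ℝ)) * q ^ m

/-- Ramanujan's theta operator `(Θg)(q) = q·g'(q)`. -/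
noncomputable def Theta (g : ℝ → ℝ) : ℝ → ℝ := fun q => q * deriv g q

/-- `P_0(q) = Σ_{j≥1} (-1)^{j-1} (2j-1) q^{j(j-1)/2}` (reindexed over `j ≥ 0`). -/
noncomputable def P0 (q : ℝ) : ℝ :=
  ∑' j : ℕ, (-1 : ℝ) ^ j * (2 * (j : ℝ) + 1) * q ^ (j * (j + 1) / 2)

/-- `P_1 = A_0` and `P_{m+1} = Θ(P_m) - 3 A_0 P_m`. -/
noncomputable def Pm : ℕ → ℝ → ℝ
  | 0 => fun _ => 0
  | 1 => fun q => A q 0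
  | m + 2 => fun q => Theta (Pm (m + 1)) q - 3 * A q 0 * Pm (m + 1) q

/-!
By Jacobi's identity `∏_{k≥1} (1 - q^k)^3 = ∑_{j≥0} (-1)^j (2j+1) q^(j(j+1)/2) = P₀`, and
`Θ log (1 - q^k) = -k q^k / (1 - q^k)` sums to `-A₀` over `k`, so `Θ P₀ = -3 A₀ P₀`. This is
proved on coefficients. Jacobi's identity modulo `q^(m+1)` is the derivative at `z = 1` of the
finite triple product `∏_{i<m} (q^i - z)(1 - q^(i+1) z) = ∑_j (-1)^j [2m, j]_q q^T(j-m) z^j`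
(a rescaled `q`-binomial theorem, `T(k) = k(k+1)/2`), reduced using `[2m, a]_q (q;q)_2m ≡ 1`;
the logarithmic derivative of the formal product then gives `n c_n = -3 ∑_{a+b=n} c_a σ(b)` for
the coefficients `c` of `P₀`. Since `Θ A_i = A_(i+1)`, on polynomials in the `A_i` the operator
`Θ` acts as the derivation `X_i ↦ X_(i+1)`, and both claims follow by induction on `m` from
`P_(m+1) = Θ P_m - 3 A₀ P_m`.
-/

section Congruences

variable {R : Type*} [CommRing R]

lemma one_sub_pow_smodEq_one (x : R) {n k : ℕ} (h : n ≤ k) :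
    1 - x ^ k ≡ 1 [SMOD Ideal.span {x ^ n}] := by
  rw [SModEq.sub_mem, Ideal.mem_span_singleton, sub_sub_cancel_left, dvd_neg]
  exact pow_dvd_pow x h

lemma prod_one_sub_pow_smodEq_one (x : R) {s : Finset ℕ} {e : ℕ → ℕ} {n : ℕ}
    (h : ∀ i ∈ s, n ≤ e i) : ∏ i ∈ s, (1 - x ^ e i) ≡ 1 [SMOD Ideal.span {x ^ n}] := by
  simpa using SModEq.prod (s := s) (x := fun i => 1 - x ^ e i) (y := fun _ => 1)
    fun i hi => one_sub_pow_smodEq_one x (h i hi)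

lemma pow_mul_smodEq_pow_mul (x : R) {a b : R} {k : ℕ} (h : a ≡ b [SMOD Ideal.span {x ^ k}])
    (l : ℕ) : x ^ l * a ≡ x ^ l * b [SMOD Ideal.span {x ^ (l + k)}] := by
  rw [SModEq.sub_mem, Ideal.mem_span_singleton] at h ⊢
  rw [← mul_sub, pow_add]
  exact mul_dvd_mul_left _ h

lemma SModEq.mono_span_pow {x a b : R} {k n : ℕ} (h : a ≡ b [SMOD Ideal.span {x ^ k}])
    (hn : n ≤ k) : a ≡ b [SMOD Ideal.span {x ^ n}] :=
  h.mono (Ideal.span_singleton_le_span_singleton.mpr (pow_dvd_pow x hn))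

end Congruences

namespace Jacobi

open Polynomial Finset

noncomputable def qBinom : ℕ → ℕ → ℤ[X]
  | _, 0 => 1
  | 0, _ + 1 => 0
  | M + 1, j + 1 => X ^ (j + 1) * qBinom M (j + 1) + qBinom M j

@[simp] lemma qBinom_zero_right (M : ℕ) : qBinom M 0 = 1 := by cases M <;> rfl

lemma qBinom_succ_succ (M j : ℕ) :
    qBinom (M + 1) (j + 1) = X ^ (j + 1) * qBinom M (j + 1) + qBinom M j := rfl

lemma qBinom_eq_zero_of_lt : ∀ {M j : ℕ}, M < j → qBinom M j = 0
  | 0, _ + 1, _ => rfl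
  | M + 1, j + 1, h => by
    rw [qBinom_succ_succ, qBinom_eq_zero_of_lt (by omega), qBinom_eq_zero_of_lt (by omega : M < j),
      mul_zero, add_zero]

lemma qBinom_self : ∀ M : ℕ, qBinom M M = 1
  | 0 => rfl
  | M + 1 => by
    rw [qBinom_succ_succ, qBinom_eq_zero_of_lt (Nat.lt_succ_self M), qBinom_self M, mul_zero,
      zero_add]

noncomputable def qPochhammer (n : ℕ) : ℤ[X] := ∏ i ∈ range n, (1 - X ^ (i + 1))

lemma qPochhammer_ne_zero (n : ℕ) : qPochhammer n ≠ 0 :=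
  prod_ne_zero_iff.mpr fun i _ h => by simpa using congrArg (eval 0) h

/-- The truncated subtraction makes the right side vanish exactly when `M < a`. -/
lemma qBinom_mul_qPochhammer : ∀ M a : ℕ,
    qBinom M a * qPochhammer a = ∏ i ∈ range a, (1 - X ^ (M + 1 + i - a))
  | M, 0 => by simp [qPochhammer]
  | 0, a + 1 => by
    rw [qBinom_eq_zero_of_lt (Nat.succ_pos a), zero_mul, prod_range_succ', eq_comm]
    simp
  | M + 1, a + 1 => by
    set P := ∏ i ∈ range a, (1 - (X : ℤ[X]) ^ (M + 1 + i - a))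
    have h₁ : qBinom M (a + 1) * qPochhammer (a + 1) = (1 - X ^ (M - a)) * P := by
      rw [qBinom_mul_qPochhammer M (a + 1), prod_range_succ', mul_comm,
        show M + 1 + 0 - (a + 1) = M - a by omega]
      exact congrArg _ (prod_congr rfl fun i _ => by congr 2; omega)
    have h₂ : qBinom M a * qPochhammer a = P := qBinom_mul_qPochhammer M a
    have h₃ : ∏ i ∈ range (a + 1), (1 - (X : ℤ[X]) ^ (M + 1 + 1 + i - (a + 1))) =
        P * (1 - X ^ (M + 1)) := by
      rw [prod_range_succ, show M + 1 + 1 + a - (a + 1) = M + 1 by omega]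
      exact congrArg (· * _) (prod_congr rfl fun i _ => by congr 2; omega)
    have hX : X ^ (a + 1) * X ^ (M - a) * P = (X : ℤ[X]) ^ (M + 1) * P := by
      rcases le_or_gt a M with h | h
      · rw [← pow_add, Nat.add_comm a 1, Nat.add_assoc, Nat.add_sub_cancel' h, Nat.add_comm]
      · have hP : P = 0 := prod_eq_zero (i := 0) (mem_range.mpr (by omega)) (by
          rw [show M + 1 + 0 - a = 0 by omega, pow_zero, sub_self])
        rw [hP, mul_zero, mul_zero]
    have hq : qPochhammer (a + 1) = qPochhammer a * (1 - X ^ (a + 1)) := prod_range_succ _ _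
    rw [h₃, qBinom_succ_succ]
    linear_combination X ^ (a + 1) * h₁ + qBinom M a * hq + (1 - X ^ (a + 1)) * h₂ - hX

lemma qBinom_mul_qPochhammer_mul_qPochhammer {M a : ℕ} (h : a ≤ M) :
    qBinom M a * qPochhammer a * qPochhammer (M - a) = qPochhammer M := by
  obtain ⟨b, rfl⟩ := Nat.exists_eq_add_of_le h
  rw [qBinom_mul_qPochhammer, Nat.add_sub_cancel_left, qPochhammer, qPochhammer,
    Nat.add_comm a b, prod_range_add, mul_comm]
  exact congrArg _ (prod_congr rfl fun i _ => by congr 2; omega)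

lemma qBinom_symm {M a : ℕ} (h : a ≤ M) : qBinom M (M - a) = qBinom M a := by
  have h₁ := qBinom_mul_qPochhammer_mul_qPochhammer h
  have h₂ := qBinom_mul_qPochhammer_mul_qPochhammer (Nat.sub_le M a)
  rw [Nat.sub_sub_self h, mul_right_comm, ← h₁, mul_assoc, mul_assoc] at h₂
  exact mul_right_cancel₀ (mul_ne_zero (qPochhammer_ne_zero _) (qPochhammer_ne_zero _)) h₂

lemma choose_two_succ (j : ℕ) : (j + 1).choose 2 = j.choose 2 + j := by
  rw [Nat.choose_succ_succ', Nat.choose_one_right, add_comm]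

lemma two_mul_choose_two (j : ℕ) : 2 * (j.choose 2 : ℤ) = j * (j - 1) := by
  induction j with
  | zero => simp
  | succ j ih =>
    rw [choose_two_succ]
    push_cast
    linear_combination ih

/-- Cauchy's `q`-binomial theorem. -/
theorem prod_one_add_pow_smul {A : Type*} [CommRing A] [Algebra ℤ[X] A] (N : ℕ) (z : A) :
    ∏ i ∈ range N, (1 + (X ^ i : ℤ[X]) • z) =
      ∑ j ∈ range (N + 1), (qBinom N j * X ^ j.choose 2) • z ^ j := by
  induction N generalizing z with
  | zero => simp
  | succ N ih =>
    set T : ℕ → ℤ[X] := fun j => qBinom N j * X ^ (j + 1).choose 2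
    have hprod : ∏ i ∈ range N, (1 + (X ^ (i + 1) : ℤ[X]) • z) =
        ∑ j ∈ range (N + 1), T j • z ^ j := by
      simp_rw [pow_succ, mul_smul, ih, _root_.smul_pow, smul_smul, mul_assoc, ← pow_add,
        ← choose_two_succ, T]
    have hT : ∑ j ∈ range (N + 1), T j • z ^ j =
        1 + ∑ j ∈ range (N + 1), T (j + 1) • z ^ (j + 1) := by
      rw [sum_range_succ', sum_range_succ _ N, add_comm]
      simp [T, qBinom_eq_zero_of_lt (Nat.lt_succ_self N)]
    have hB (j : ℕ) : qBinom (N + 1) (j + 1) * X ^ (j + 1).choose 2 = T (j + 1) + T j := by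
      simp only [T, qBinom_succ_succ, choose_two_succ (j + 1), pow_add]
      ring
    rw [prod_range_succ', hprod, pow_zero, one_smul, mul_add, mul_one, sum_mul]
    simp_rw [smul_mul_assoc, ← pow_succ]
    rw [hT, sum_range_succ' _ (N + 1)]
    simp_rw [hB, add_smul, sum_add_distrib]
    simp only [qBinom_zero_right, Nat.choose_zero_succ, pow_zero, mul_one, one_smul]
    abel

def tri (k : ℤ) : ℕ := (k * (k + 1) / 2).toNat

lemma two_mul_tri (k : ℤ) : 2 * (tri k : ℤ) = k * (k + 1) := by
  obtain ⟨c, hc⟩ := (Int.even_mul_succ_self k).two_dvd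
  have hc0 : 0 ≤ c := by nlinarith [sq_nonneg (2 * k + 1)]
  rw [tri, hc, Int.mul_ediv_cancel_left _ two_ne_zero, Int.toNat_of_nonneg hc0]

lemma tri_neg_sub_one (k : ℤ) : tri (-k - 1) = tri k := by
  have h₁ := two_mul_tri (-k - 1)
  have h₂ := two_mul_tri k
  have : (tri (-k - 1) : ℤ) = tri k := by linarith
  exact_mod_cast this

lemma tri_natCast (i : ℕ) : tri i = i * (i + 1) / 2 := by
  have h := two_mul_tri i
  have h' := Nat.div_mul_cancel (Nat.even_mul_succ_self i).two_dvd
  zify at h'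
  linarith

lemma le_tri (i : ℕ) : i ≤ tri i := by
  have h := two_mul_tri i
  have : (i : ℤ) ≤ tri i := by nlinarith
  exact_mod_cast this

lemma strictMono_tri_natCast : StrictMono fun j : ℕ => tri j :=
  strictMono_nat_of_lt_succ fun j => by
    have h₁ := two_mul_tri (j + 1 : ℕ)
    have h₂ := two_mul_tri j
    push_cast at h₁
    have : (tri j : ℤ) < tri ((j : ℤ) + 1) := by nlinarith
    exact_mod_cast this

noncomputable def tripleProd (m : ℕ) : ℤ[X][X] :=
  (∏ i ∈ range m, (C (X ^ i) - X)) * ∏ i ∈ range m, (1 - C (X ^ (i + 1)) * X)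

lemma tripleProd_comp_C_mul_X (n : ℕ) :
    (tripleProd (n + 1)).comp (C (X ^ n) * X) =
      C (X ^ (n + 1).choose 2) * ∏ i ∈ range (2 * (n + 1)), (1 + (X ^ i : ℤ[X]) • -X) := by
  have h₁ : ∀ i ∈ range (n + 1), C ((X : ℤ[X]) ^ i) - C (X ^ n) * X =
      C (X ^ i) * (1 + (X ^ (n - i) : ℤ[X]) • -X) := fun i hi => by
    rw [smul_eq_C_mul, mul_add, mul_one, ← mul_assoc, ← C_mul, ← pow_add,
      Nat.add_sub_cancel' (Nat.lt_succ_iff.mp (mem_range.mp hi))]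
    ring
  have h₂ : ∀ i ∈ range (n + 1), 1 - C ((X : ℤ[X]) ^ (i + 1)) * (C (X ^ n) * X) =
      1 + (X ^ (n + 1 + i) : ℤ[X]) • -X := fun i _ => by
    rw [smul_eq_C_mul, ← mul_assoc, ← C_mul, ← pow_add]
    ring_nf
  have hrefl : ∏ i ∈ range (n + 1), (1 + (X ^ (n - i) : ℤ[X]) • -(X : ℤ[X][X])) =
      ∏ i ∈ range (n + 1), (1 + (X ^ i : ℤ[X]) • -(X : ℤ[X][X])) :=
    prod_range_reflect (fun i => 1 + (X ^ i : ℤ[X]) • -(X : ℤ[X][X])) (n + 1)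
  rw [tripleProd, mul_comp, Polynomial.prod_comp, Polynomial.prod_comp]
  simp only [sub_comp, C_comp, X_comp, one_comp, mul_comp]
  rw [prod_congr rfl h₁, prod_congr rfl h₂, prod_mul_distrib, ← map_prod, prod_pow_eq_pow_sum,
    sum_range_id, ← Nat.choose_two_right, hrefl, two_mul,
    prod_range_add (fun i => 1 + (X ^ i : ℤ[X]) • -(X : ℤ[X][X])) (n + 1) (n + 1), mul_assoc]

lemma coeff_sum_smul_neg_X_pow (K j : ℕ) (a : ℕ → ℤ[X]) :
    (∑ k ∈ range K, a k • (-X : ℤ[X][X]) ^ k).coeff j = if j < K then (-1) ^ j * a j else 0 := by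
  have hterm (k : ℕ) : a k • (-X : ℤ[X][X]) ^ k = C ((-1) ^ k * a k) * X ^ k := by
    rw [smul_eq_C_mul, map_mul, map_pow, map_neg, map_one, neg_pow (X : ℤ[X][X])]
    ring
  simp only [hterm, finsetSum_coeff, coeff_C_mul_X_pow, sum_ite_eq, mem_range]

/-- The finite form of Jacobi's triple product identity. -/
theorem coeff_tripleProd (m j : ℕ) :
    (tripleProd m).coeff j = (-1) ^ j * qBinom (2 * m) j * X ^ tri (j - m) := by
  rcases m with _ | n
  · rcases j with _ | j
    · simp [tripleProd, tri]
    · simp [tripleProd, qBinom_eq_zero_of_lt, coeff_one]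
  have hexp : tri (j - (n + 1 : ℕ)) + n * j = (n + 1).choose 2 + j.choose 2 := by
    have h₁ := two_mul_tri (j - (n + 1 : ℕ))
    have h₂ := two_mul_choose_two (n + 1)
    have h₃ := two_mul_choose_two j
    push_cast at h₁ h₂ h₃
    have : 2 * ((tri (j - (n + 1 : ℕ)) + n * j : ℕ) : ℤ) =
        2 * (((n + 1).choose 2 + j.choose 2 : ℕ) : ℤ) := by
      push_cast
      linear_combination h₁ - h₂ - h₃
    exact_mod_cast mul_left_cancel₀ two_ne_zero this
  have h := congrArg (coeff · j) (tripleProd_comp_C_mul_X n)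
  simp only [comp_C_mul_X_coeff, coeff_C_mul, prod_one_add_pow_smul, coeff_sum_smul_neg_X_pow] at h
  rw [ite_eq_left_iff.mpr fun hj => by rw [qBinom_eq_zero_of_lt (by omega)]; simp] at h
  refine mul_right_cancel₀ (pow_ne_zero _ (pow_ne_zero n X_ne_zero)) (h.trans ?_)
  rw [← pow_mul, mul_assoc, ← pow_add, hexp, pow_add]
  ring

lemma natDegree_tripleProd_le (m : ℕ) : (tripleProd m).natDegree ≤ 2 * m :=
  natDegree_le_iff_coeff_eq_zero.mpr fun j hj => by
    rw [coeff_tripleProd, qBinom_eq_zero_of_lt hj, mul_zero, zero_mul]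

lemma eval_one_derivative_tripleProd (m : ℕ) :
    (derivative (tripleProd (m + 1))).eval 1 =
      (-1) ^ (m + 1) * (qPochhammer m * qPochhammer (m + 1)) := by
  set R : ℤ[X][X] := (∏ i ∈ range m, (C (X ^ (i + 1)) - X)) *
    ∏ i ∈ range (m + 1), (1 - C (X ^ (i + 1)) * X)
  have hsplit : tripleProd (m + 1) = (1 - X) * R := by
    rw [tripleProd, prod_range_succ' (fun i => C ((X : ℤ[X]) ^ i) - X)]
    simp only [R, pow_zero, map_one]
    ring
  have hR : R.eval 1 = (-1) ^ m * (qPochhammer m * qPochhammer (m + 1)) := by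
    have hneg : ∏ i ∈ range m, ((X : ℤ[X]) ^ (i + 1) - 1) = (-1) ^ m * qPochhammer m := by
      simpa [qPochhammer] using prod_neg (s := range m) fun i => 1 - (X : ℤ[X]) ^ (i + 1)
    simp only [R, eval_mul, eval_prod, eval_sub, eval_C, eval_X, eval_one, mul_one, hneg,
      qPochhammer]
    ring
  have hd : ((1 - X) * R).derivative.eval 1 = - R.eval 1 := by simp [derivative_mul]
  rw [hsplit, hd, hR]
  ring

lemma sum_mul_coeff_tripleProd (m : ℕ) :
    ∑ j ∈ range (2 * (m + 1) + 1), (j : ℤ[X]) * (tripleProd (m + 1)).coeff j =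
      (-1) ^ (m + 1) * (qPochhammer m * qPochhammer (m + 1)) := by
  rw [← eval_one_derivative_tripleProd, derivative_eval,
    sum_over_range' _ (fun _ => by simp) _ (Nat.lt_succ_of_le (natDegree_tripleProd_le _))]
  simp [mul_comm]

noncomputable def pairCoeff (n i : ℕ) : ℤ[X] :=
  ((n + i : ℕ) : ℤ[X]) * qBinom (2 * n) (n + i) -
    ((n - 1 - i : ℕ) : ℤ[X]) * qBinom (2 * n) (n + 1 + i)

/-- The coefficients of `z ^ (n + i)` and `z ^ (n - 1 - i)` in `tripleProd n` carry the same
power of `q` and are summed together. -/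
lemma sum_mul_coeff_tripleProd_eq_sum_pairCoeff (n : ℕ) :
    ∑ j ∈ range (2 * n + 1), (j : ℤ[X]) * (tripleProd n).coeff j =
      ∑ i ∈ range n, (-1) ^ (n + i) * X ^ tri i * pairCoeff n i +
        ((2 * n : ℕ) : ℤ[X]) * X ^ tri n := by
  rw [sum_range_succ, two_mul, sum_range_add, ← sum_range_reflect, ← sum_add_distrib]
  congr 1
  · refine sum_congr rfl fun i hi => ?_
    have hi : i < n := mem_range.mp hi
    have hsymm : qBinom (n + n) (n - 1 - i) = qBinom (n + n) (n + 1 + i) := by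
      rw [← qBinom_symm (show n + 1 + i ≤ n + n by omega)]
      congr 1
      omega
    have hsign : (-1 : ℤ[X]) ^ (n - 1 - i) = -(-1) ^ (n + i) := by
      rw [show n + i = n - 1 - i + 2 * i + 1 by omega, pow_succ, pow_add, pow_mul]
      simp
    rw [coeff_tripleProd, coeff_tripleProd, pairCoeff, two_mul, hsymm, hsign,
      show ((n - 1 - i : ℕ) : ℤ) - n = -i - 1 by omega, tri_neg_sub_one,
      show ((n + i : ℕ) : ℤ) - n = i by omega]
    ring
  · rw [coeff_tripleProd, two_mul, qBinom_self, ← two_mul,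
      show (((2 * n : ℕ) : ℤ) - n) = n by omega, Even.neg_one_pow ⟨n, by omega⟩]
    ring

lemma qPochhammer_smodEq {n k : ℕ} (h : n ≤ k) :
    qPochhammer k ≡ qPochhammer n [SMOD Ideal.span {(X : ℤ[X]) ^ (n + 1)}] := by
  obtain ⟨d, rfl⟩ := Nat.exists_eq_add_of_le h
  rw [qPochhammer, prod_range_add, ← qPochhammer]
  have h : ∏ i ∈ range d, (1 - (X : ℤ[X]) ^ (n + i + 1)) ≡ 1
      [SMOD Ideal.span {(X : ℤ[X]) ^ (n + 1)}] :=
    prod_one_sub_pow_smodEq_one X fun i _ => by omega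
  simpa using (SModEq.refl (qPochhammer n)).mul h

lemma qBinom_mul_qPochhammer_smodEq_one {M a : ℕ} (ha : a ≤ M) (hM : M ≤ 2 * a) :
    qBinom M a * qPochhammer M ≡ 1 [SMOD Ideal.span {(X : ℤ[X]) ^ (M + 1 - a)}] := by
  obtain ⟨b, rfl⟩ := Nat.exists_eq_add_of_le ha
  rw [qPochhammer, prod_range_add, ← qPochhammer, ← mul_assoc, qBinom_mul_qPochhammer]
  have h₁ : ∏ i ∈ range a, (1 - (X : ℤ[X]) ^ (a + b + 1 + i - a)) ≡ 1
      [SMOD Ideal.span {(X : ℤ[X]) ^ (a + b + 1 - a)}] :=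
    prod_one_sub_pow_smodEq_one X fun i _ => by omega
  have h₂ : ∏ i ∈ range b, (1 - (X : ℤ[X]) ^ (a + i + 1)) ≡ 1
      [SMOD Ideal.span {(X : ℤ[X]) ^ (a + b + 1 - a)}] :=
    prod_one_sub_pow_smodEq_one X fun i _ => by omega
  simpa using h₁.mul h₂

lemma pairCoeff_mul_qPochhammer_smodEq {n i : ℕ} (hi : i < n) :
    X ^ tri i * (pairCoeff n i * qPochhammer (2 * n)) ≡ X ^ tri i * ((2 * i + 1 : ℕ) : ℤ[X])
      [SMOD Ideal.span {(X : ℤ[X]) ^ n}] := by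
  have h₁ := SModEq.mono_span_pow (n := n - i)
    (qBinom_mul_qPochhammer_smodEq_one (M := 2 * n) (a := n + i) (by omega) (by omega))
    (by omega)
  have h₂ := qBinom_mul_qPochhammer_smodEq_one (M := 2 * n) (a := n + 1 + i) (by omega)
    (by omega)
  rw [show 2 * n + 1 - (n + 1 + i) = n - i by omega] at h₂
  have hw := ((SModEq.refl ((n + i : ℕ) : ℤ[X])).mul h₁).sub
    ((SModEq.refl ((n - 1 - i : ℕ) : ℤ[X])).mul h₂)
  rw [mul_one, mul_one, ← Nat.cast_sub (by omega), show n + i - (n - 1 - i) = 2 * i + 1 by omega,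
    ← mul_assoc, ← mul_assoc, ← sub_mul, ← pairCoeff] at hw
  exact SModEq.mono_span_pow (pow_mul_smodEq_pow_mul X hw (tri i)) (by have := le_tri i; omega)

/-- Jacobi's identity modulo `q ^ (m + 1)`. -/
theorem qPochhammer_pow_three_smodEq (m : ℕ) :
    qPochhammer m ^ 3 ≡ ∑ i ∈ range (m + 1), C ((-1 : ℤ) ^ i * (2 * i + 1)) * X ^ tri i
      [SMOD Ideal.span {(X : ℤ[X]) ^ (m + 1)}] := by
  have E := sum_mul_coeff_tripleProd m
  rw [sum_mul_coeff_tripleProd_eq_sum_pairCoeff] at E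
  set n := m + 1
  have hsq : (-1 : ℤ[X]) ^ n * (-1) ^ n = 1 := by rw [← pow_add, ← two_mul, pow_mul]; simp
  have hcube : qPochhammer m ^ 3 ≡ qPochhammer m * qPochhammer n * qPochhammer (2 * n)
      [SMOD Ideal.span {(X : ℤ[X]) ^ n}] := by
    rw [pow_three, ← mul_assoc]
    exact (((SModEq.refl _).mul (qPochhammer_smodEq (by omega))).mul
      (qPochhammer_smodEq (by omega))).symm
  have hlast : ((2 * n : ℕ) : ℤ[X]) * X ^ tri n * qPochhammer (2 * n) ≡ 0
      [SMOD Ideal.span {(X : ℤ[X]) ^ n}] := by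
    rw [SModEq.sub_mem, sub_zero, Ideal.mem_span_singleton]
    exact ((pow_dvd_pow X (le_tri n)).mul_left _).mul_right _
  have hsum : (-1) ^ n * (qPochhammer m * qPochhammer n) * qPochhammer (2 * n) ≡
      ∑ i ∈ range n, (-1) ^ (n + i) * (X ^ tri i * ((2 * i + 1 : ℕ) : ℤ[X])) + 0
      [SMOD Ideal.span {(X : ℤ[X]) ^ n}] := by
    rw [← E, add_mul, sum_mul]
    refine SModEq.add (SModEq.sum fun i hi => ?_) hlast
    rw [mul_assoc, mul_assoc]
    exact (SModEq.refl _).mul (pairCoeff_mul_qPochhammer_smodEq (mem_range.mp hi))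
  calc qPochhammer m ^ 3 ≡ qPochhammer m * qPochhammer n * qPochhammer (2 * n)
        [SMOD Ideal.span {(X : ℤ[X]) ^ n}] := hcube
    _ = (-1) ^ n * ((-1) ^ n * (qPochhammer m * qPochhammer n) * qPochhammer (2 * n)) := by
      linear_combination (-(qPochhammer m * qPochhammer n * qPochhammer (2 * n))) * hsq
    _ ≡ (-1) ^ n * (∑ i ∈ range n, (-1) ^ (n + i) * (X ^ tri i * ((2 * i + 1 : ℕ) : ℤ[X])) + 0)
        [SMOD Ideal.span {(X : ℤ[X]) ^ n}] := (SModEq.refl _).mul hsum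
    _ = _ := by
      rw [add_zero, mul_sum]
      refine sum_congr rfl fun i _ => ?_
      rw [pow_add]
      simp only [map_mul, map_pow, map_neg, map_one, map_add, map_natCast, map_ofNat]
      push_cast
      linear_combination ((-1) ^ i * (2 * i + 1) * X ^ tri i) * hsq

/-- The coefficients of `∑ (-1)^j (2j+1) q^(j(j+1)/2)`. -/
noncomputable def jacobiCoeff : ℕ → ℤ :=
  Function.extend (fun j : ℕ => tri j) (fun j => (-1) ^ j * (2 * j + 1)) 0

lemma jacobiCoeff_tri (j : ℕ) : jacobiCoeff (tri j) = (-1) ^ j * (2 * j + 1) :=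
  strictMono_tri_natCast.injective.extend_apply _ _ j

lemma jacobiCoeff_eq_zero {n : ℕ} (h : ∀ j : ℕ, tri j ≠ n) : jacobiCoeff n = 0 :=
  Function.extend_apply' _ _ _ fun ⟨j, hj⟩ => h j hj

lemma coeff_sum_C_mul_X_pow_tri {N n : ℕ} (hn : n ≤ N) :
    (∑ i ∈ range (N + 1), C ((-1 : ℤ) ^ i * (2 * i + 1)) * X ^ tri i).coeff n =
      jacobiCoeff n := by
  simp only [finsetSum_coeff, coeff_C_mul_X_pow]
  by_cases h : ∃ j : ℕ, tri j = n
  · obtain ⟨j, rfl⟩ := h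
    rw [jacobiCoeff_tri, sum_eq_single_of_mem j (mem_range.mpr (by have := le_tri j; omega)),
      if_pos rfl]
    exact fun i _ hij => if_neg fun h => hij (strictMono_tri_natCast.injective h.symm)
  · simp only [not_exists] at h
    rw [jacobiCoeff_eq_zero h]
    exact sum_eq_zero fun i _ => if_neg fun hi => h i hi.symm

theorem coeff_qPochhammer_pow_three {N n : ℕ} (hn : n ≤ N) :
    (qPochhammer N ^ 3).coeff n = jacobiCoeff n := by
  have h := qPochhammer_pow_three_smodEq N
  rw [SModEq.sub_mem, Ideal.mem_span_singleton, X_pow_dvd_iff] at h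
  rw [← coeff_sum_C_mul_X_pow_tri hn, ← sub_eq_zero, ← coeff_sub]
  exact h n (by omega)

end Jacobi

namespace Jacobi

open PowerSeries Finset
open scoped ArithmeticFunction.sigma

/-- `∑_{r ≥ 1} q^((k+1) r)`. -/
noncomputable def geomTail (k : ℕ) : ℤ⟦X⟧ := expand (k + 1) k.succ_ne_zero (X * PowerSeries.mk 1)

lemma one_sub_X_pow_mul_geomTail (k : ℕ) : (1 - X ^ (k + 1)) * geomTail k = X ^ (k + 1) := by
  rw [geomTail, ← expand_X (k + 1) k.succ_ne_zero, ← map_one (expand (k + 1) k.succ_ne_zero),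
    ← map_sub, ← map_mul, mul_left_comm, mul_comm (1 - _), mk_one_mul_one_sub_eq_one, mul_one]

lemma coeff_geomTail (k n : ℕ) : coeff n (geomTail k) = if k + 1 ∈ n.divisors then 1 else 0 := by
  simp only [geomTail, coeff_expand, Nat.mem_divisors]
  by_cases h : k + 1 ∣ n
  · obtain ⟨r, rfl⟩ := h
    rw [Nat.mul_div_cancel_left r k.succ_pos]
    rcases r with _ | r
    · simp
    · simp [coeff_succ_X_mul]
  · simp [h]

noncomputable def lambertSeries (N : ℕ) : ℤ⟦X⟧ := ∑ k ∈ range N, ((k + 1 : ℕ) : ℤ⟦X⟧) * geomTail k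

lemma coeff_lambertSeries {N n : ℕ} (hn : n ≤ N) : coeff n (lambertSeries N) = σ 1 n := by
  have hdiv : n.divisors = (range (N + 1)).filter (· ∈ n.divisors) := by
    ext d
    simp only [mem_filter, mem_range, iff_and_self]
    exact fun hd => Nat.lt_succ_of_le ((Nat.divisor_le hd).trans hn)
  rw [ArithmeticFunction.sigma_one_apply, hdiv, sum_filter, sum_range_succ', lambertSeries]
  simp only [map_sum, ite_self, add_zero, Nat.cast_sum]
  refine sum_congr rfl fun k _ => ?_
  rw [← map_natCast C, coeff_C_mul, coeff_geomTail]
  split_ifs <;> simp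

lemma coe_qPochhammer (N : ℕ) : (qPochhammer N : ℤ⟦X⟧) = ∏ k ∈ range N, (1 - X ^ (k + 1)) := by
  rw [qPochhammer, ← Polynomial.coeToPowerSeries.ringHom_apply, map_prod]
  simp [Polynomial.coeToPowerSeries.ringHom_apply]

lemma X_mul_derivative_qPochhammer (N : ℕ) :
    X * d⁄dX ℤ (qPochhammer N : ℤ⟦X⟧) = -(qPochhammer N : ℤ⟦X⟧) * lambertSeries N := by
  rw [coe_qPochhammer, lambertSeries]
  induction N with
  | zero => simp
  | succ N ih =>
    have hfactor : X * d⁄dX ℤ (1 - X ^ (N + 1)) =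
        -((1 - X ^ (N + 1)) * (((N + 1 : ℕ) : ℤ⟦X⟧) * geomTail N)) := by
      rw [mul_left_comm, one_sub_X_pow_mul_geomTail, map_sub, Derivation.map_one_eq_zero,
        Derivation.leibniz_pow, derivative_X]
      simp only [Nat.add_sub_cancel, nsmul_eq_mul, smul_eq_mul, mul_one]
      ring
    rw [prod_range_succ, sum_range_succ, Derivation.leibniz, smul_eq_mul, smul_eq_mul]
    linear_combination (∏ k ∈ range N, (1 - X ^ (k + 1) : ℤ⟦X⟧)) * hfactor +
      (1 - X ^ (N + 1) : ℤ⟦X⟧) * ih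

lemma coeff_X_mul_derivative (f : ℤ⟦X⟧) (n : ℕ) : coeff n (X * d⁄dX ℤ f) = n * coeff n f := by
  rcases n with _ | n
  · simp
  · rw [coeff_succ_X_mul, coeff_derivative]
    push_cast
    ring

/-- The logarithmic derivative of Jacobi's identity, read on coefficients. -/
theorem jacobiCoeff_recurrence (n : ℕ) :
    (n : ℤ) * jacobiCoeff n = -3 * ∑ p ∈ antidiagonal n, jacobiCoeff p.1 * σ 1 p.2 := by
  have hlog : X * d⁄dX ℤ ((qPochhammer n : ℤ⟦X⟧) ^ 3) =
      C (-3) * ((qPochhammer n : ℤ⟦X⟧) ^ 3 * lambertSeries n) := by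
    rw [Derivation.leibniz_pow]
    simp only [nsmul_eq_mul, smul_eq_mul, map_neg, map_ofNat, Nat.cast_ofNat]
    linear_combination (3 * (qPochhammer n : ℤ⟦X⟧) ^ 2) * X_mul_derivative_qPochhammer n
  have hcube (a : ℕ) (ha : a ≤ n) : coeff a ((qPochhammer n : ℤ⟦X⟧) ^ 3) = jacobiCoeff a := by
    rw [← Polynomial.coe_pow, Polynomial.coeff_coe, coeff_qPochhammer_pow_three ha]
  have h := congrArg (coeff n) hlog
  rw [coeff_X_mul_derivative, hcube n le_rfl, coeff_C_mul, coeff_mul] at h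
  rw [h]
  congr 1
  refine sum_congr rfl fun p hp => ?_
  have hp' := mem_antidiagonal.mp hp
  rw [hcube p.1 (by omega), coeff_lambertSeries (by omega)]

end Jacobi

open Filter Asymptotics Topology

section ThetaOperator

variable {f g : ℝ → ℝ} {q : ℝ}

lemma theta_congr (h : f =ᶠ[𝓝 q] g) : Theta f q = Theta g q := by
  simp only [Theta, h.deriv_eq]

lemma theta_add (hf : DifferentiableAt ℝ f q) (hg : DifferentiableAt ℝ g q) :
    Theta (fun x => f x + g x) q = Theta f q + Theta g q := by
  simp only [Theta, deriv_fun_add hf hg]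
  ring

lemma theta_mul (hf : DifferentiableAt ℝ f q) (hg : DifferentiableAt ℝ g q) :
    Theta (fun x => f x * g x) q = Theta f q * g q + f q * Theta g q := by
  simp only [Theta, deriv_fun_mul hf hg]
  ring

lemma theta_const_mul (c : ℝ) : Theta (fun x => c * f x) q = c * Theta f q := by
  simp only [Theta, deriv_const_mul_field']
  ring

end ThetaOperator

section PowerSeriesOnUnitInterval

variable {a : ℕ → ℝ} {k : ℕ}

lemma summable_pow_mul_norm_mul_pow (ha : a =O[atTop] fun n : ℕ => (n : ℝ) ^ k) (j : ℕ)
    {r : ℝ} (hr : |r| < 1) : Summable fun n : ℕ => (n : ℝ) ^ j * ‖a n‖ * |r| ^ n := by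
  refine summable_of_isBigO_nat
    (summable_pow_mul_geometric_of_norm_lt_one (j + k) (by rwa [Real.norm_eq_abs, abs_abs])) ?_
  have := ((isBigO_refl (fun n : ℕ => (n : ℝ) ^ j) atTop).mul ha.norm_left).mul
    (isBigO_refl (fun n : ℕ => |r| ^ n) atTop)
  simpa only [pow_add] using this

lemma summable_norm_mul_pow (ha : a =O[atTop] fun n : ℕ => (n : ℝ) ^ k) {x : ℝ} (hx : |x| < 1) :
    Summable fun n => ‖a n * x ^ n‖ := by
  simpa [abs_mul, abs_pow] using summable_pow_mul_norm_mul_pow ha 0 hx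

theorem hasDerivAt_tsum_mul_pow (ha : a =O[atTop] fun n : ℕ => (n : ℝ) ^ k) {q : ℝ}
    (hq : |q| < 1) :
    HasDerivAt (fun x => ∑' n, a n * x ^ n) (∑' n, a n * (n * q ^ (n - 1))) q := by
  set r := (1 + |q|) / 2 with hr
  have hr0 : 0 < r := by positivity
  have hr1 : |r| < 1 := by rw [abs_of_pos hr0, hr]; linarith
  have hqr : |q| < r := by rw [hr]; linarith
  refine hasDerivAt_tsum_of_isPreconnected ((summable_pow_mul_norm_mul_pow ha 1 hr1).div_const r)
    Metric.isOpen_ball (convex_ball 0 r).isPreconnected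
    (fun (n : ℕ) y _ => (hasDerivAt_pow n y).const_mul (a n)) (fun n y hy => ?_)
    (Metric.mem_ball_self hr0) (summable_norm_mul_pow ha (by simp)).of_norm ?_
  · rw [mem_ball_zero_iff, Real.norm_eq_abs] at hy
    rcases n with _ | n
    · simp
    rw [abs_of_pos hr0, pow_one, pow_succ, mul_div_assoc, mul_div_cancel_right₀ _ hr0.ne']
    simp only [norm_mul, norm_pow, Nat.add_sub_cancel, Real.norm_eq_abs, Nat.abs_cast]
    calc _ = (n + 1 : ℕ) * |a (n + 1)| * |y| ^ n := by ring
      _ ≤ (n + 1 : ℕ) * |a (n + 1)| * r ^ n := by gcongr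
  · rwa [mem_ball_zero_iff, Real.norm_eq_abs]

theorem theta_tsum_mul_pow (ha : a =O[atTop] fun n : ℕ => (n : ℝ) ^ k) {q : ℝ} (hq : |q| < 1) :
    Theta (fun x => ∑' n, a n * x ^ n) q = ∑' n, n * a n * q ^ n := by
  rw [Theta, (hasDerivAt_tsum_mul_pow ha hq).deriv, ← tsum_mul_left]
  refine tsum_congr fun n => ?_
  rcases n with _ | n
  · simp
  · rw [Nat.add_sub_cancel, pow_succ]
    ring

end PowerSeriesOnUnitInterval

section SeriesAAndP0

open Jacobi Finset
open scoped ArithmeticFunction.sigma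

variable {q : ℝ}

lemma isBigO_pow_mul_sum_divisors (i : ℕ) :
    (fun n : ℕ => (n : ℝ) ^ i * ∑ d ∈ n.divisors, (d : ℝ)) =O[atTop]
      fun n : ℕ => (n : ℝ) ^ (i + 2) := by
  refine IsBigO.of_bound 1 (Eventually.of_forall fun n => ?_)
  have hσ : ∑ d ∈ n.divisors, d ≤ n ^ 2 := by
    simpa [ArithmeticFunction.sigma_one_apply] using ArithmeticFunction.sigma_le_pow_succ 1 n
  have hσ' : ∑ d ∈ n.divisors, (d : ℝ) ≤ (n : ℝ) ^ 2 := by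
    simpa using (Nat.cast_le (α := ℝ)).mpr hσ
  rw [one_mul, Real.norm_eq_abs, Real.norm_eq_abs, abs_of_nonneg (by positivity),
    abs_of_nonneg (by positivity), pow_add]
  gcongr

lemma differentiableAt_A (i : ℕ) (hq : |q| < 1) : DifferentiableAt ℝ (fun x => A x i) q :=
  (hasDerivAt_tsum_mul_pow (isBigO_pow_mul_sum_divisors i) hq).differentiableAt

lemma theta_A (i : ℕ) (hq : |q| < 1) : Theta (fun x => A x i) q = A q (i + 1) := by
  change Theta (fun x => ∑' n : ℕ, ((n : ℝ) ^ i * ∑ d ∈ n.divisors, (d : ℝ)) * x ^ n) q = _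
  rw [theta_tsum_mul_pow (isBigO_pow_mul_sum_divisors i) hq, A]
  exact tsum_congr fun n => by ring

lemma P0_eq_tsum : P0 = fun x => ∑' n, (jacobiCoeff n : ℝ) * x ^ n := by
  funext x
  have hsupp : Function.support (fun n => (jacobiCoeff n : ℝ) * x ^ n) ⊆
      Set.range fun j : ℕ => tri j := fun n hn => by
    by_contra h
    simp only [Set.mem_range, not_exists] at h
    simp [jacobiCoeff_eq_zero h] at hn
  rw [P0, ← strictMono_tri_natCast.injective.tsum_eq hsupp]
  refine tsum_congr fun j => ?_
  rw [jacobiCoeff_tri, tri_natCast]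
  push_cast
  ring

lemma abs_jacobiCoeff_le (n : ℕ) : |(jacobiCoeff n : ℝ)| ≤ 2 * n + 1 := by
  by_cases h : ∃ j : ℕ, tri j = n
  · obtain ⟨j, rfl⟩ := h
    have hj : (j : ℝ) ≤ tri j := by exact_mod_cast le_tri j
    rw [jacobiCoeff_tri]
    push_cast
    rw [abs_mul, abs_pow, abs_neg, abs_one, one_pow, one_mul, abs_of_nonneg (by positivity)]
    linarith
  · simp only [not_exists] at h
    rw [jacobiCoeff_eq_zero h, Int.cast_zero, abs_zero]
    positivity

lemma isBigO_jacobiCoeff :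
    (fun n => (jacobiCoeff n : ℝ)) =O[atTop] fun n : ℕ => (n : ℝ) ^ 1 := by
  refine IsBigO.of_bound 3 ((eventually_ge_atTop 1).mono fun n hn => ?_)
  have : (1 : ℝ) ≤ n := by exact_mod_cast hn
  rw [Real.norm_eq_abs, Real.norm_eq_abs, pow_one, Nat.abs_cast]
  linarith [abs_jacobiCoeff_le n]

lemma differentiableAt_P0 (hq : |q| < 1) : DifferentiableAt ℝ P0 q := by
  rw [P0_eq_tsum]
  exact (hasDerivAt_tsum_mul_pow isBigO_jacobiCoeff hq).differentiableAt

theorem theta_P0 (hq : |q| < 1) : Theta P0 q = -3 * P0 q * A q 0 := by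
  have hσ : (fun n : ℕ => (σ 1 n : ℝ)) =O[atTop] fun n : ℕ => (n : ℝ) ^ 2 := by
    simpa [ArithmeticFunction.sigma_one_apply] using isBigO_pow_mul_sum_divisors 0
  have hA : A q 0 = ∑' n, (σ 1 n : ℝ) * q ^ n :=
    tsum_congr fun n => by simp [ArithmeticFunction.sigma_one_apply]
  have hrec (n : ℕ) : (n : ℝ) * jacobiCoeff n =
      -3 * ∑ p ∈ antidiagonal n, (jacobiCoeff p.1 : ℝ) * σ 1 p.2 := by
    exact_mod_cast jacobiCoeff_recurrence n
  rw [P0_eq_tsum, theta_tsum_mul_pow isBigO_jacobiCoeff hq, hA, mul_assoc,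
    tsum_mul_tsum_eq_tsum_sum_antidiagonal_of_summable_norm
      (summable_norm_mul_pow isBigO_jacobiCoeff hq) (summable_norm_mul_pow hσ hq),
    ← tsum_mul_left]
  refine tsum_congr fun n => ?_
  rw [hrec, mul_sum, mul_sum, sum_mul]
  refine sum_congr rfl fun p hp => ?_
  rw [← mem_antidiagonal.mp hp, pow_add]
  ring

end SeriesAAndP0

section PolynomialsInA

open MvPolynomial

noncomputable def shiftDerivation : Derivation ℚ (MvPolynomial ℕ ℚ) (MvPolynomial ℕ ℚ) :=
  mkDerivation ℚ fun i => X (i + 1)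

lemma shiftDerivation_X (i : ℕ) : shiftDerivation (X i) = X (i + 1) :=
  mkDerivation_X ℚ _ i

lemma shiftDerivation_mem_supported {n : ℕ} {p : MvPolynomial ℕ ℚ}
    (hp : p ∈ supported ℚ (Set.Iio n)) : shiftDerivation p ∈ supported ℚ (Set.Iio (n + 1)) := by
  have hmono : supported ℚ (Set.Iio n) ≤ supported ℚ (Set.Iio (n + 1)) :=
    supported_mono (Set.Iio_subset_Iio n.le_succ)
  rw [supported_eq_adjoin_X] at hp
  induction hp using Algebra.adjoin_induction with
  | mem x hx =>
    obtain ⟨i, hi, rfl⟩ := hx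
    rw [shiftDerivation_X]
    exact X_mem_supported.mpr (Nat.succ_lt_succ hi)
  | algebraMap r => simp
  | add x y _ _ hx hy => simpa using add_mem hx hy
  | mul x y hx' hy' hx hy =>
    rw [Derivation.leibniz, smul_eq_mul, smul_eq_mul]
    rw [← supported_eq_adjoin_X] at hx' hy'
    exact add_mem (mul_mem (hmono hx') hy) (mul_mem (hmono hy') hx)

noncomputable def evalA (p : MvPolynomial ℕ ℚ) (q : ℝ) : ℝ := aeval (fun i => A q i) p

lemma evalA_C (r : ℚ) : evalA (C r) = fun _ => (r : ℝ) := by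
  funext x
  simp [evalA]

lemma evalA_add (p p' : MvPolynomial ℕ ℚ) :
    evalA (p + p') = fun x => evalA p x + evalA p' x := by
  funext x
  simp [evalA]

lemma evalA_mul_X (p : MvPolynomial ℕ ℚ) (i : ℕ) :
    evalA (p * X i) = fun x => evalA p x * A x i := by
  funext x
  simp [evalA]

variable {q : ℝ}

lemma differentiableAt_evalA (p : MvPolynomial ℕ ℚ) (hq : |q| < 1) :
    DifferentiableAt ℝ (evalA p) q := by
  induction p using MvPolynomial.induction_on with
  | C r => rw [evalA_C]; exact differentiableAt_const _
  | add p p' hp hp' => rw [evalA_add]; exact hp.add hp'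
  | mul_X p i hp => rw [evalA_mul_X]; exact hp.mul (differentiableAt_A i hq)

lemma theta_evalA (p : MvPolynomial ℕ ℚ) (hq : |q| < 1) :
    Theta (evalA p) q = evalA (shiftDerivation p) q := by
  induction p using MvPolynomial.induction_on with
  | C r =>
    rw [evalA_C, Theta, deriv_const, mul_zero, ← algebraMap_eq, Derivation.map_algebraMap]
    simp [evalA]
  | add p p' hp hp' =>
    rw [evalA_add, theta_add (differentiableAt_evalA p hq) (differentiableAt_evalA p' hq), hp,
      hp', map_add, evalA_add]
  | mul_X p i hp =>
    rw [evalA_mul_X, theta_mul (differentiableAt_evalA p hq) (differentiableAt_A i hq), hp,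
      theta_A i hq, Derivation.leibniz, shiftDerivation_X, smul_eq_mul, smul_eq_mul, evalA_add]
    simp only [evalA, map_mul, aeval_X]
    ring

noncomputable def pmPoly : ℕ → MvPolynomial ℕ ℚ
  | 0 => X 0
  | m + 1 => shiftDerivation (pmPoly m) - 3 * X 0 * pmPoly m

lemma pmPoly_mem_supported : ∀ m : ℕ, pmPoly m ∈ supported ℚ (Set.Iio (m + 1))
  | 0 => X_mem_supported.mpr Nat.zero_lt_one
  | m + 1 => by
    have h := pmPoly_mem_supported m
    refine sub_mem (shiftDerivation_mem_supported h) (mul_mem (mul_mem ?_ ?_)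
      (supported_mono (Set.Iio_subset_Iio (m + 1).le_succ) h))
    · exact Subalgebra.algebraMap_mem _ (3 : ℚ)
    · exact X_mem_supported.mpr (Nat.succ_pos _)

lemma eqOn_Pm_succ_evalA (m : ℕ) : Set.EqOn (Pm (m + 1)) (evalA (pmPoly m)) (Set.Ioo 0 1) := by
  induction m with
  | zero => intro x _; simp [Pm, pmPoly, evalA]
  | succ m ih =>
    intro x hx
    have hev : Pm (m + 1) =ᶠ[𝓝 x] evalA (pmPoly m) :=
      eventuallyEq_of_mem (isOpen_Ioo.mem_nhds hx) ih
    change Theta (Pm (m + 1)) x - 3 * A x 0 * Pm (m + 1) x = _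
    rw [theta_congr hev, theta_evalA _ (abs_lt.mpr ⟨by linarith [hx.1], hx.2⟩), ih hx]
    simp [evalA, pmPoly]

end PolynomialsInA

theorem iterate_theta_P0 (m : ℕ) {q : ℝ} (hq : q ∈ Set.Ioo 0 1) :
    (Theta^[m + 1] P0) q = -3 * P0 q * Pm (m + 1) q := by
  have hq' : |q| < 1 := abs_lt.mpr ⟨by linarith [hq.1], hq.2⟩
  induction m generalizing q with
  | zero => exact theta_P0 hq'
  | succ m ih =>
    have hnhds : Set.Ioo (0 : ℝ) 1 ∈ 𝓝 q := isOpen_Ioo.mem_nhds hq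
    have hev : Theta^[m + 1] P0 =ᶠ[𝓝 q] fun x => -3 * P0 x * Pm (m + 1) x :=
      eventuallyEq_of_mem hnhds fun x hx => ih hx (abs_lt.mpr ⟨by linarith [hx.1], hx.2⟩)
    have hPm : DifferentiableAt ℝ (Pm (m + 1)) q :=
      (differentiableAt_evalA _ hq').congr_of_eventuallyEq
        (eventuallyEq_of_mem hnhds (eqOn_Pm_succ_evalA m))
    rw [Function.iterate_succ_apply', theta_congr hev,
      theta_mul (f := fun x => -3 * P0 x) ((differentiableAt_P0 hq').const_mul _) hPm,
      theta_const_mul, theta_P0 hq']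
    change _ = -3 * P0 q * (Theta (Pm (m + 1)) q - 3 * A q 0 * Pm (m + 1) q)
    ring

theorem stmt12 :
    (∀ m : ℕ, 1 ≤ m → ∀ q : ℝ, 0 < q → q < 1 →
      (Theta^[m] P0) q = -3 * P0 q * Pm m q) ∧
    (∀ m : ℕ, 1 ≤ m → ∃ P : MvPolynomial (Fin m) ℚ,
      ∀ q : ℝ, 0 < q → q < 1 →
        Pm m q = MvPolynomial.aeval (fun t : Fin m => A q (t : ℕ)) P) := by
  refine ⟨fun m hm q hq₀ hq₁ => ?_, fun m hm => ?_⟩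
  · obtain ⟨m, rfl⟩ := Nat.exists_eq_add_of_le' hm
    exact iterate_theta_P0 m ⟨hq₀, hq₁⟩
  · obtain ⟨m, rfl⟩ := Nat.exists_eq_add_of_le' hm
    obtain ⟨P, hP⟩ := MvPolynomial.exists_rename_eq_of_vars_subset_range (pmPoly m) Fin.val
      Fin.val_injective (by
        rw [Fin.range_val]
        exact MvPolynomial.mem_supported.mp (pmPoly_mem_supported m))
    refine ⟨P, fun q hq₀ hq₁ => ?_⟩
    rw [eqOn_Pm_succ_evalA m ⟨hq₀, hq₁⟩, evalA, ← hP, MvPolynomial.aeval_rename]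
    rfl
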